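/- Let G be a 3-free digraph on n vertices, and let a→b→c→d→a be a directed 4-cycle in G. For distinct vertices u,v let m(u,v) be the number of vertices x such that (u,x,v) is an induced directed 3-vertex path. Then m(a,c) + m(c,a) + m(b,d) + m(d,b) ≤ n. -/

import Mathlib

/-- A digraph is 3-free: no directed cycles of length 1, 2 or 3. -/
def ThreeFree {V : Type*} (E : V → V → Prop) : Prop :=
  (∀ v, ¬ E v v) ∧ (∀ u v, ¬ (E u v ∧ E v u)) ∧
    ∀ u v w, ¬ (E u v ∧ E v w ∧ E w u)

/-- `(u, x, v)` is an induced directed 3-vertex path. -/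
def InducedP3 {V : Type*} (E : V → V → Prop) (u x v : V) : Prop :=
  u ≠ x ∧ x ≠ v ∧ u ≠ v ∧ E u x ∧ E x v ∧ ¬ E x u ∧ ¬ E v x ∧ ¬ E u v ∧ ¬ E v u

instance {V : Type*} [DecidableEq V] (E : V → V → Prop) [DecidableRel E] (u x v : V) :
    Decidable (InducedP3 E u x v) := by unfold InducedP3; infer_instance

/-- The number of induced 3-vertex paths from `u` to `v` (counted by middle vertex). -/
def mCount (n : ℕ) (E : Fin n → Fin n → Prop) [DecidableRel E] (u v : Fin n) : ℕ :=
  (Finset.univ.filter fun x => InducedP3 E u x v).card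

/-!
If a vertex `x` were the middle of two of the four induced paths, then `x` would lie on a
directed 2-cycle (for the paths `a → x → c` and `c → x → a`) or on a directed triangle closed
by an edge of the 4-cycle (e.g. `x → d → a → x` for `a → x → c` and `b → x → d`). So the four
sets of middle vertices are pairwise disjoint subsets of the `n` vertices.
-/

open Finset

section

variable {V : Type*} {E : V → V → Prop} {u x v u' v' : V}

theorem InducedP3.adj_left (h : InducedP3 E u x v) : E u x := h.2.2.2.1

theorem InducedP3.adj_right (h : InducedP3 E u x v) : E x v := h.2.2.2.2.1

theorem InducedP3.not_swap (hE : ThreeFree E) (h : InducedP3 E u x v) :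
    ¬ InducedP3 E v x u :=
  fun h' => hE.2.1 x v ⟨h.adj_right, h'.adj_left⟩

theorem InducedP3.not_of_adj (hE : ThreeFree E) (h : InducedP3 E u x v) (e : E v u') :
    ¬ InducedP3 E u' x v' :=
  fun h' => hE.2.2 x v u' ⟨h.adj_right, e, h'.adj_left⟩

end

theorem Finset.card_add_card_add_card_add_card_le_card {α : Type*} [Fintype α] [DecidableEq α]
    {s t u w : Finset α} (hst : Disjoint s t) (hsu : Disjoint s u) (hsw : Disjoint s w)
    (htu : Disjoint t u) (htw : Disjoint t w) (huw : Disjoint u w) :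
    #s + #t + #u + #w ≤ Fintype.card α := by
  rw [← card_union_of_disjoint hst, ← card_union_of_disjoint (disjoint_union_left.2 ⟨hsu, htu⟩),
    ← card_union_of_disjoint (disjoint_union_left.2 ⟨disjoint_union_left.2 ⟨hsw, htw⟩, huw⟩)]
  exact card_le_univ _

theorem middle_vertices_bound_general (n : ℕ) (E : Fin n → Fin n → Prop) [DecidableRel E]
    (h3 : ThreeFree E) (a b c d : Fin n)
    (e1 : E a b) (e2 : E b c) (e3 : E c d) (e4 : E d a) :
    mCount n E a c + mCount n E c a + mCount n E b d + mCount n E d b ≤ n := by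
  refine (card_add_card_add_card_add_card_le_card ?_ ?_ ?_ ?_ ?_ ?_).trans_eq (Fintype.card_fin n)
  all_goals refine disjoint_filter.2 fun x _ h h' => ?_
  · exact h.not_swap h3 h'
  · exact h'.not_of_adj h3 e4 h
  · exact h.not_of_adj h3 e3 h'
  · exact h.not_of_adj h3 e1 h'
  · exact h'.not_of_adj h3 e2 h
  · exact h.not_swap h3 h'

theorem middle_vertices_bound (n : ℕ) (E : Fin n → Fin n → Prop) [DecidableRel E]
    (h3 : ThreeFree E) (a b c d : Fin n)
    (hab : a ≠ b) (hac : a ≠ c) (had : a ≠ d) (hbc : b ≠ c) (hbd : b ≠ d) (hcd : c ≠ d)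
    (e1 : E a b) (e2 : E b c) (e3 : E c d) (e4 : E d a) :
    mCount n E a c + mCount n E c a + mCount n E b d + mCount n E d b ≤ n :=
  middle_vertices_bound_general n E h3 a b c d e1 e2 e3 e4
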